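/- arXiv:2412.08321 — 2 statements merged into one kernel-verified Lean document; each statement's English description precedes it below -/
import Mathlib

section
/- Let (X, d) be a metric space, p ≥ 1 a real number, and c > 0. Define D on X ∪ {∅} (i.e., on Option X) by: D(∅, ∅) = 0; D(x, y) = min(c, d(x, y)) for x, y ∈ X; and D(x, ∅) = D(∅, y) = c / 2^{1/p} for x, y ∈ X. Then D is a metric on X ∪ {∅}. -/
/-!
Between two present points `D` is the metric `d` truncated at `c`, which is again a metric.
A missing element sits at distance `c / 2^{1/p}` from every point, so the only other
triangle inequality with content is `D(x, y) ≤ D(x, ∅) + D(∅, y)`, i.e. `min c (d x y) ≤ 2 c / 2^{1/p}`;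
this holds because `2^{1/p} ≤ 2` for `p ≥ 1`.
-/

/-- The GOSPA-type base distance `d_p^{(c)}` on `X ∪ {∅}` (modeled by `Option X`):
`0` when both elements are absent, the cut-off distance `min c (dist x y)` when
both are present, and `c / 2^{1/p}` when exactly one is present. -/
noncomputable def gospaBase {X : Type*} [MetricSpace X] (p c : ℝ) :
    Option X → Option X → ℝ
  | none, none => 0
  | some x, some y => min c (dist x y)
  | some _, none => c / (2 : ℝ) ^ (1 / p)
  | none, some _ => c / (2 : ℝ) ^ (1 / p)

theorem min_add_le_min_add_min {α : Type*} [AddCommMonoid α] [LinearOrder α]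
    [IsOrderedAddMonoid α] {a b c : α} (ha : 0 ≤ a) (hb : 0 ≤ b) (hc : 0 ≤ c) :
    min c (a + b) ≤ min c a + min c b := by
  rcases le_total c a with hca | hac
  · rw [min_eq_left hca]
    exact (min_le_left c _).trans (le_add_of_nonneg_right (le_min hc hb))
  rcases le_total c b with hcb | hbc
  · rw [min_eq_left hcb]
    exact (min_le_left c _).trans (le_add_of_nonneg_left (le_min hc ha))
  rw [min_eq_right hac, min_eq_right hbc]
  exact min_le_right c _

theorem min_dist_triangle {X : Type*} [PseudoMetricSpace X] {c : ℝ} (hc : 0 ≤ c) (x y z : X) :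
    min c (dist x z) ≤ min c (dist x y) + min c (dist y z) :=
  (min_le_min_left c (dist_triangle x y z)).trans
    (min_add_le_min_add_min dist_nonneg dist_nonneg hc)

theorem le_two_mul_div_rpow_one_div {p c : ℝ} (hp : 1 ≤ p) (hc : 0 ≤ c) :
    c ≤ 2 * (c / 2 ^ (1 / p)) := by
  have hpow_le : (2 : ℝ) ^ (1 / p) ≤ 2 :=
    Real.rpow_le_self_of_one_le one_le_two ((div_le_one (by linarith)).mpr hp)
  rw [mul_div_assoc', le_div_iff₀ (by positivity), mul_comm 2 c]
  exact mul_le_mul_of_nonneg_left hpow_le hc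

theorem min_dist_eq_zero_iff {X : Type*} [MetricSpace X] {c : ℝ} (hc : 0 < c) (x y : X) :
    min c (dist x y) = 0 ↔ x = y := by
  rw [min_eq_iff, dist_eq_zero]
  simp only [hc.ne', false_and, false_or, and_iff_left_iff_imp]
  rintro rfl
  simpa using hc.le

section gospaBase

variable {X : Type*} [MetricSpace X] {p c : ℝ}

theorem gospaBase_nonneg (hc : 0 ≤ c) (a b : Option X) : 0 ≤ gospaBase p c a b := by
  rcases a with _ | x <;> rcases b with _ | y <;> simp only [gospaBase] <;> positivity

theorem gospaBase_comm (a b : Option X) : gospaBase p c a b = gospaBase p c b a := by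
  rcases a with _ | x <;> rcases b with _ | y <;> simp only [gospaBase, dist_comm]

theorem gospaBase_eq_zero_iff (hc : 0 < c) {a b : Option X} : gospaBase p c a b = 0 ↔ a = b := by
  have hmiss : c / (2 : ℝ) ^ (1 / p) ≠ 0 := by positivity
  rcases a with _ | x <;> rcases b with _ | y
  · simp only [gospaBase]
  · simpa only [gospaBase, reduceCtorEq, iff_false] using hmiss
  · simpa only [gospaBase, reduceCtorEq, iff_false] using hmiss
  · simpa only [gospaBase, Option.some.injEq] using min_dist_eq_zero_iff hc x y

theorem gospaBase_triangle (hp : 1 ≤ p) (hc : 0 ≤ c) (a b d : Option X) :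
    gospaBase p c a d ≤ gospaBase p c a b + gospaBase p c b d := by
  have hmiss : 0 ≤ c / (2 : ℝ) ^ (1 / p) := by positivity
  have hmin : ∀ x y : X, 0 ≤ min c (dist x y) := fun _ _ => le_min hc dist_nonneg
  have hgap := le_two_mul_div_rpow_one_div hp hc
  rcases a with _ | x <;> rcases b with _ | y <;> rcases d with _ | z <;> simp only [gospaBase]
  · exact (add_zero 0).ge
  · exact (zero_add _).ge
  · exact add_nonneg hmiss hmiss
  · exact le_add_of_nonneg_right (hmin y z)
  · exact (add_zero _).ge
  · linarith [min_le_left c (dist x z)]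
  · exact le_add_of_nonneg_left (hmin x y)
  · exact min_dist_triangle hc x y z

end gospaBase

/-- The GOSPA base distance is a metric on `X ∪ {∅}`. -/
theorem gospaBase_is_metric {X : Type*} [MetricSpace X] (p c : ℝ)
    (hp : 1 ≤ p) (hc : 0 < c) :
    (∀ a b : Option X, 0 ≤ gospaBase p c a b) ∧
    (∀ a b : Option X, gospaBase p c a b = gospaBase p c b a) ∧
    (∀ a b : Option X, gospaBase p c a b = 0 ↔ a = b) ∧
    (∀ a b d : Option X,
      gospaBase p c a d ≤ gospaBase p c a b + gospaBase p c b d) :=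
  ⟨gospaBase_nonneg hc.le, gospaBase_comm, fun _ _ => gospaBase_eq_zero_iff hc,
    gospaBase_triangle hp hc.le⟩
end

section
/- Equip ℝ² = ℝ × ℝ with the supremum (maximum) metric. For axis-aligned bounding boxes x = [ℓ₁, r₁] × [ℓ₂, r₂] and y = [ℓ₁', r₁'] × [ℓ₂', r₂'] (with ℓᵢ ≤ rᵢ and ℓᵢ' ≤ rᵢ'), the Hausdorff distance between x and y equals max( max(|ℓ₁ − ℓ₁'|, |r₁ − r₁'|), max(|ℓ₂ − ℓ₂'|, |r₂ − r₂'|) ). -/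
/-!
For the maximum metric the distance from a point to a product set is the maximum of the
coordinate distances, so the Hausdorff distance between products of nonempty sets is the maximum
of the coordinatewise Hausdorff distances. For two intervals, clamping a point of one into the
other moves it by at most `max |l - l'| |r - r'|`, and this bound is attained at an endpoint.
-/

open Metric Set

variable {α β : Type*}

section PseudoEMetric

variable [PseudoEMetricSpace α] [PseudoEMetricSpace β] {s₁ t₁ : Set α} {s₂ t₂ : Set β}

lemma infEDist_fst_le_hausdorffEDist_prod {x : α × β} (hx : x ∈ s₁ ×ˢ s₂) :
    infEDist x.1 t₁ ≤ hausdorffEDist (s₁ ×ˢ s₂) (t₁ ×ˢ t₂) :=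
  (infEDist_prod x t₁ t₂ ▸ le_max_left _ _).trans (infEDist_le_hausdorffEDist_of_mem hx)

lemma infEDist_snd_le_hausdorffEDist_prod {x : α × β} (hx : x ∈ s₁ ×ˢ s₂) :
    infEDist x.2 t₂ ≤ hausdorffEDist (s₁ ×ˢ s₂) (t₁ ×ˢ t₂) :=
  (infEDist_prod x t₁ t₂ ▸ le_max_right _ _).trans (infEDist_le_hausdorffEDist_of_mem hx)

lemma hausdorffEDist_prod (hs₁ : s₁.Nonempty) (ht₁ : t₁.Nonempty) (hs₂ : s₂.Nonempty)
    (ht₂ : t₂.Nonempty) :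
    hausdorffEDist (s₁ ×ˢ s₂) (t₁ ×ˢ t₂) = max (hausdorffEDist s₁ t₁) (hausdorffEDist s₂ t₂) := by
  refine le_antisymm hausdorffEDist_prod_le (max_le ?_ ?_)
  · obtain ⟨b, hb⟩ := hs₂
    obtain ⟨b', hb'⟩ := ht₂
    refine hausdorffEDist_le_of_infEDist (fun a ha => ?_) (fun a' ha' => ?_)
    · exact infEDist_fst_le_hausdorffEDist_prod (x := (a, b)) ⟨ha, hb⟩
    · rw [hausdorffEDist_comm]
      exact infEDist_fst_le_hausdorffEDist_prod (x := (a', b')) ⟨ha', hb'⟩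
  · obtain ⟨a, ha⟩ := hs₁
    obtain ⟨a', ha'⟩ := ht₁
    refine hausdorffEDist_le_of_infEDist (fun b hb => ?_) (fun b' hb' => ?_)
    · exact infEDist_snd_le_hausdorffEDist_prod (x := (a, b)) ⟨ha, hb⟩
    · rw [hausdorffEDist_comm]
      exact infEDist_snd_le_hausdorffEDist_prod (x := (a', b')) ⟨ha', hb'⟩

end PseudoEMetric

lemma hausdorffDist_prod [PseudoMetricSpace α] [PseudoMetricSpace β] {s₁ t₁ : Set α}
    {s₂ t₂ : Set β} (hs₁ : s₁.Nonempty) (ht₁ : t₁.Nonempty) (hs₂ : s₂.Nonempty)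
    (ht₂ : t₂.Nonempty) (fin₁ : hausdorffEDist s₁ t₁ ≠ ⊤) (fin₂ : hausdorffEDist s₂ t₂ ≠ ⊤) :
    hausdorffDist (s₁ ×ˢ s₂) (t₁ ×ˢ t₂) = max (hausdorffDist s₁ t₁) (hausdorffDist s₂ t₂) := by
  rw [hausdorffDist, hausdorffEDist_prod hs₁ ht₁ hs₂ ht₂, ENNReal.toReal_max fin₁ fin₂]
  rfl

lemma le_hausdorffDist_of_mem [PseudoMetricSpace α] {s t : Set α} {x : α} {c : ℝ}
    (hx : x ∈ s) (ht : t.Nonempty) (fin : hausdorffEDist s t ≠ ⊤)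
    (h : ∀ y ∈ t, c ≤ dist x y) : c ≤ hausdorffDist s t :=
  ((le_infDist ht).2 h).trans (infDist_le_hausdorffDist_of_mem hx fin)

section Interval

variable {l r l' r' : ℝ}

lemma hausdorffEDist_Icc_ne_top (h : l ≤ r) (h' : l' ≤ r') :
    hausdorffEDist (Icc l r) (Icc l' r') ≠ ⊤ :=
  hausdorffEDist_ne_top_of_nonempty_of_bounded (nonempty_Icc.2 h) (nonempty_Icc.2 h')
    (isBounded_Icc l r) (isBounded_Icc l' r')

lemma dist_projIcc_le {x : ℝ} (hx : x ∈ Icc l r) (h' : l' ≤ r') :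
    dist x (projIcc l' r' h' x) ≤ max |l - l'| |r - r'| := by
  rcases le_total x l' with hxl' | hl'x
  · rw [projIcc_of_le_left h' hxl', Subtype.coe_mk, dist_comm, Real.dist_eq, abs_sub_comm l]
    exact le_max_of_le_left (abs_le_abs (by linarith [hx.1]) (by linarith [hx.1]))
  rcases le_total r' x with hr'x | hxr'
  · rw [projIcc_of_right_le h' hr'x, Subtype.coe_mk, Real.dist_eq]
    exact le_max_of_le_right (abs_le_abs (by linarith [hx.2]) (by linarith [hx.2]))
  · rw [projIcc_of_mem (h := h') ⟨hl'x, hxr'⟩]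
    exact (dist_self x).trans_le (by positivity)

lemma hausdorffDist_Icc_le (h : l ≤ r) (h' : l' ≤ r') :
    hausdorffDist (Icc l r) (Icc l' r') ≤ max |l - l'| |r - r'| := by
  refine hausdorffDist_le_of_mem_dist (by positivity) (fun x hx => ?_) (fun x hx => ?_)
  · exact ⟨projIcc l' r' h' x, Subtype.mem _, dist_projIcc_le hx h'⟩
  · rw [abs_sub_comm l, abs_sub_comm r]
    exact ⟨projIcc l r h x, Subtype.mem _, dist_projIcc_le hx h⟩

lemma sub_le_hausdorffDist_Icc_left (h : l ≤ r) (h' : l' ≤ r') :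
    l - l' ≤ hausdorffDist (Icc l r) (Icc l' r') := by
  rw [hausdorffDist_comm]
  refine le_hausdorffDist_of_mem (left_mem_Icc.2 h') (nonempty_Icc.2 h)
    (hausdorffEDist_Icc_ne_top h' h) fun y hy => ?_
  rw [Real.dist_eq, abs_sub_comm]
  exact (sub_le_sub_right hy.1 l').trans (le_abs_self _)

lemma sub_le_hausdorffDist_Icc_right (h : l ≤ r) (h' : l' ≤ r') :
    r' - r ≤ hausdorffDist (Icc l r) (Icc l' r') := by
  rw [hausdorffDist_comm]
  refine le_hausdorffDist_of_mem (right_mem_Icc.2 h') (nonempty_Icc.2 h)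
    (hausdorffEDist_Icc_ne_top h' h) fun y hy => ?_
  rw [Real.dist_eq]
  exact (sub_le_sub_left hy.2 r').trans (le_abs_self _)

lemma hausdorffDist_Icc (h : l ≤ r) (h' : l' ≤ r') :
    hausdorffDist (Icc l r) (Icc l' r') = max |l - l'| |r - r'| := by
  refine le_antisymm (hausdorffDist_Icc_le h h') (max_le ?_ ?_) <;> rw [abs_sub_le_iff]
  · refine ⟨sub_le_hausdorffDist_Icc_left h h', ?_⟩
    rw [hausdorffDist_comm]
    exact sub_le_hausdorffDist_Icc_left h' h
  · refine ⟨?_, sub_le_hausdorffDist_Icc_right h h'⟩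
    rw [hausdorffDist_comm]
    exact sub_le_hausdorffDist_Icc_right h' h

end Interval

/-- Equip `ℝ² = ℝ × ℝ` with the supremum (maximum) metric (the product metric in
Mathlib). For axis-aligned bounding boxes `x = [ℓ₁,r₁] × [ℓ₂,r₂]` and
`y = [ℓ₁',r₁'] × [ℓ₂',r₂']`, the Hausdorff distance equals
`max (max |ℓ₁ − ℓ₁'| |r₁ − r₁'|) (max |ℓ₂ − ℓ₂'| |r₂ − r₂'|)`. -/
theorem hausdorffDist_boxes (l₁ r₁ l₂ r₂ l₁' r₁' l₂' r₂' : ℝ)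
    (h₁ : l₁ ≤ r₁) (h₂ : l₂ ≤ r₂) (h₁' : l₁' ≤ r₁') (h₂' : l₂' ≤ r₂') :
    Metric.hausdorffDist
        ((Set.Icc l₁ r₁ ×ˢ Set.Icc l₂ r₂ : Set (ℝ × ℝ)))
        ((Set.Icc l₁' r₁' ×ˢ Set.Icc l₂' r₂' : Set (ℝ × ℝ))) =
      max (max |l₁ - l₁'| |r₁ - r₁'|) (max |l₂ - l₂'| |r₂ - r₂'|) := by
  rw [hausdorffDist_prod (nonempty_Icc.2 h₁) (nonempty_Icc.2 h₁') (nonempty_Icc.2 h₂)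
    (nonempty_Icc.2 h₂') (hausdorffEDist_Icc_ne_top h₁ h₁') (hausdorffEDist_Icc_ne_top h₂ h₂'),
    hausdorffDist_Icc h₁ h₁', hausdorffDist_Icc h₂ h₂']
end
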